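/- arXiv:1901.06004 — 3 statements merged into one kernel-verified Lean document; each statement's English description precedes it below -/
import Mathlib

section
/- Let 0 < s < 1 (s real) and φ_s(x) = ∫_ℝ e^{-ixy} (1+y²)^{-(s+1)/2} dy. Then ∫_ℝ |φ_s(x)|² |x|^{-s} dx < ∞; that is, φ_s ∈ L²(ℝ, |x|^{-s} dx). -/
open MeasureTheory Complex Set Real FourierTransform

lemma integrableOn_comp_neg' {f : ℝ → ℝ} {S : Set ℝ} (hf : IntegrableOn f S volume) :
    IntegrableOn (fun x => f (-x)) ((fun x : ℝ => -x) ⁻¹' S) volume :=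
  (MeasurePreserving.integrableOn_comp_preimage (Measure.measurePreserving_neg _)
    (Homeomorph.neg ℝ).measurableEmbedding).2 hf

lemma weight_int_Icc (s : ℝ) (hs1 : s < 1) :
    IntegrableOn (fun x : ℝ => |x| ^ (-s)) (Icc (-1) 1) volume := by
  have h1 : IntegrableOn (fun x : ℝ => |x| ^ (-s)) (Ioc 0 1) volume := by
    have h := (intervalIntegral.intervalIntegrable_rpow' (a := (0:ℝ)) (b := 1)
      (by linarith : (-1:ℝ) < -s)).1
    exact h.congr_fun (fun x hx => by rw [abs_of_pos hx.1]) measurableSet_Ioc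
  have h2 : IntegrableOn (fun x : ℝ => |x| ^ (-s)) (Ioo (-1) 0) volume := by
    have h := integrableOn_comp_neg' (h1.mono_set Ioo_subset_Ioc_self)
    have hset : (fun x : ℝ => -x) ⁻¹' (Ioo 0 1) = Ioo (-1) 0 := by
      ext x; simp [neg_lt, lt_neg, and_comm]
    rw [hset] at h
    exact h.congr_fun (fun x _ => by simp only [abs_neg]) measurableSet_Ioo
  have h2' : IntegrableOn (fun x : ℝ => |x| ^ (-s)) (Ioc (-1) 0) volume :=
    (integrableOn_Ioc_iff_integrableOn_Ioo (hb := enorm_ne_top)).2 h2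
  rw [integrableOn_Icc_iff_integrableOn_Ioc,
    show Ioc (-1:ℝ) 1 = Ioc (-1) 0 ∪ Ioc 0 1 by rw [Set.Ioc_union_Ioc_eq_Ioc] <;> norm_num]
  exact h2'.union h1

lemma weight_int_tail (s : ℝ) (hs0 : 0 < s) :
    IntegrableOn (fun x : ℝ => |x| ^ (-s - 2)) ((Icc (-1:ℝ) 1)ᶜ) volume := by
  have h1 : IntegrableOn (fun x : ℝ => |x| ^ (-s - 2)) (Ioi 1) volume := by
    have h := integrableOn_Ioi_rpow_of_lt (by linarith : -s - 2 < -1) one_pos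
    exact h.congr_fun (fun x hx => by rw [abs_of_pos (lt_trans one_pos hx)]) measurableSet_Ioi
  have h2 : IntegrableOn (fun x : ℝ => |x| ^ (-s - 2)) (Iio (-1)) volume := by
    have h := integrableOn_comp_neg' h1
    have hset : (fun x : ℝ => -x) ⁻¹' (Ioi 1) = Iio (-1) := by
      ext x; simp [lt_neg]
    rw [hset] at h
    exact h.congr_fun (fun x _ => by simp only [abs_neg]) measurableSet_Iio
  have : (Icc (-1:ℝ) 1)ᶜ = Iio (-1) ∪ Ioi 1 := by
    ext x; constructor
    · intro hx
      rcases lt_or_ge x (-1) with h | h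
      · exact Or.inl h
      · exact Or.inr (by simpa using fun h2 => hx ⟨h, h2⟩)
    · rintro (h | h) ⟨h1x, h2x⟩ <;> simp only [mem_Iio, mem_Ioi] at h <;> linarith
  rw [this]
  exact h2.union h1

theorem phi_s_mem_Hs (s : ℝ) (hs0 : 0 < s) (hs1 : s < 1) :
    (∫⁻ x : ℝ,
        (‖∫ y : ℝ, Complex.exp (-(x * y) * Complex.I) *
            (((1 + y ^ 2) ^ (-(s + 1) / 2) : ℝ) : ℂ)‖₊ : ENNReal) ^ 2 *
          ENNReal.ofReal (|x| ^ (-s))) < ⊤ := by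
  -- basic notation
  set p : ℝ := -(s + 1) / 2 with hp
  set g : ℝ → ℝ := fun y => (1 + y ^ 2) ^ p with hgdef
  set f : ℝ → ℂ := fun y => ((g y : ℝ) : ℂ) with hfdef
  have hpos : ∀ y : ℝ, (0:ℝ) < 1 + y ^ 2 := fun y => by positivity
  have key : ∀ r : ℝ, 1 < r → Integrable (fun y : ℝ => (1 + y ^ 2) ^ (-r / 2)) := by
    intro r hr
    have := integrable_rpow_neg_one_add_norm_sq (E := ℝ) (μ := volume) (r := r)
      (by simpa using hr)
    simpa [Real.norm_eq_abs, sq_abs] using this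
  have hg_int : Integrable g := by
    have := key (s + 1) (by linarith)
    simpa [hgdef, hp, neg_div] using this
  have hf_int : Integrable f := hg_int.ofReal
  -- derivative
  set g' : ℝ → ℝ := fun y => 2 * y * p * (1 + y ^ 2) ^ (p - 1) with hg'def
  have hpneg : p < 0 := by rw [hp]; linarith
  have hgderiv : ∀ y : ℝ, HasDerivAt g (g' y) y := by
    intro y
    have h1 : HasDerivAt (fun y : ℝ => 1 + y ^ 2) (2 * y) y := by
      simpa using ((hasDerivAt_pow 2 y).const_add 1)
    exact h1.rpow_const (Or.inl (hpos y).ne')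
  have hfderiv : ∀ y : ℝ, HasDerivAt f ((g' y : ℝ) : ℂ) y := fun y => (hgderiv y).ofReal_comp
  have hfdiff : Differentiable ℝ f := fun y => (hfderiv y).differentiableAt
  have hderiv_eq : deriv f = fun y => ((g' y : ℝ) : ℂ) := funext fun y => (hfderiv y).deriv
  have hcg' : Continuous g' := by
    have hc : Continuous fun y : ℝ => (1 + y ^ 2) ^ (p - 1) :=
      (continuous_const.add (continuous_pow 2)).rpow_const fun y => Or.inl (hpos y).ne'
    exact ((continuous_const.mul continuous_id).mul continuous_const).mul hc
  have hybound : ∀ y : ℝ, |y| ≤ (1 + y ^ 2) ^ ((1:ℝ)/2) := by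
    intro y
    rw [show |y| = Real.sqrt (y ^ 2) by rw [Real.sqrt_sq_eq_abs],
      Real.sqrt_eq_rpow]
    exact Real.rpow_le_rpow (sq_nonneg y) (by nlinarith) (by norm_num)
  have hg'bound : ∀ y : ℝ, ‖((g' y : ℝ) : ℂ)‖ ≤ (s + 1) * (1 + y ^ 2) ^ (-(s + 2) / 2) := by
    intro y
    have e1 : ‖((g' y : ℝ) : ℂ)‖ = 2 * |y| * ((s + 1) / 2) * ((1 + y ^ 2) ^ (p - 1)) := by
      rw [Complex.norm_real, Real.norm_eq_abs]
      have : |g' y| = |2| * |y| * |p| * |(1 + y ^ 2) ^ (p - 1)| := by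
        rw [hg'def]; rw [abs_mul, abs_mul, abs_mul]
      rw [this, (by norm_num : |(2:ℝ)| = 2), abs_of_neg hpneg, abs_of_pos (Real.rpow_pos_of_pos (hpos y) _), hp]
      ring
    rw [e1]
    calc 2 * |y| * ((s + 1) / 2) * ((1 + y ^ 2) ^ (p - 1))
        ≤ 2 * ((1 + y ^ 2) ^ ((1:ℝ)/2)) * ((s + 1) / 2) * ((1 + y ^ 2) ^ (p - 1)) := by
          have hb := hybound y
          have hr : (0:ℝ) < (1 + y ^ 2) ^ (p - 1) := Real.rpow_pos_of_pos (hpos y) _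
          exact mul_le_mul_of_nonneg_right (mul_le_mul_of_nonneg_right
            (mul_le_mul_of_nonneg_left hb (by norm_num : (0:ℝ) ≤ 2))
            (by linarith : (0:ℝ) ≤ (s + 1) / 2)) hr.le
      _ = (s + 1) * (1 + y ^ 2) ^ ((1:ℝ)/2 + (p - 1)) := by
          rw [Real.rpow_add (hpos y)]; ring
      _ = (s + 1) * (1 + y ^ 2) ^ (-(s + 2) / 2) := by
          have : (1:ℝ)/2 + (p - 1) = -(s + 2) / 2 := by rw [hp]; ring
          rw [this]
  have hf'_int : Integrable (deriv f) := by
    rw [hderiv_eq]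
    have hbound : Integrable (fun y : ℝ => (s + 1) * (1 + y ^ 2) ^ (-(s + 2) / 2)) :=
      (key (s + 2) (by linarith)).const_mul _
    refine hbound.mono' ((Complex.continuous_ofReal.comp hcg').aestronglyMeasurable)
      (Filter.Eventually.of_forall fun y => ?_)
    exact hg'bound y
  -- Fourier identity
  have hFeq : ∀ x : ℝ,
      (∫ y : ℝ, Complex.exp (-(↑x * ↑y) * Complex.I) * (((1 + y ^ 2) ^ p : ℝ) : ℂ)) =
        𝓕 f (x / (2 * π)) := by
    intro x
    rw [Real.fourier_real_eq_integral_exp_smul]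
    apply integral_congr_ae
    filter_upwards with y
    have harg : -2 * π * y * (x / (2 * π)) = -(x * y) := by
      field_simp
    rw [smul_eq_mul, harg]
    norm_cast
  -- generic norm bound
  have normF : ∀ (h : ℝ → ℂ) (w : ℝ), ‖𝓕 h w‖ ≤ ∫ y : ℝ, ‖h y‖ := by
    intro h w
    rw [Real.fourier_real_eq_integral_exp_smul]
    refine (norm_integral_le_integral_norm _).trans (le_of_eq ?_)
    congr 1
    funext y
    rw [norm_smul, Complex.norm_exp_ofReal_mul_I, one_mul]
  set C : ℝ := ∫ y : ℝ, g y with hC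
  have hC0 : 0 ≤ C := integral_nonneg fun y => Real.rpow_nonneg (hpos y).le _
  have hA : ∀ w : ℝ, ‖𝓕 f w‖ ≤ C := by
    intro w
    refine (normF f w).trans (le_of_eq ?_)
    rw [hC]
    congr 1
    funext y
    rw [hfdef]
    simp only [Complex.norm_real, Real.norm_eq_abs]
    exact abs_of_nonneg (Real.rpow_nonneg (hpos y).le _)
  set C' : ℝ := ∫ y : ℝ, ‖deriv f y‖ with hC'
  have hC'0 : 0 ≤ C' := integral_nonneg fun y => norm_nonneg _
  have hB : ∀ x : ℝ, x ≠ 0 → ‖𝓕 f (x / (2 * π))‖ ≤ C' * |x|⁻¹ := by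
    intro x hx
    have h1 : ‖𝓕 (deriv f) (x / (2 * π))‖ ≤ C' := normF _ _
    rw [Real.fourier_deriv hf_int hfdiff hf'_int] at h1
    rw [norm_smul] at h1
    have h2 : ‖(2 * (π:ℂ) * Complex.I * ((x / (2 * π) : ℝ) : ℂ) : ℂ)‖ = |x| := by
      have hπ : (π:ℂ) ≠ 0 := by exact_mod_cast Real.pi_ne_zero
      have he : (2 * (π:ℂ) * Complex.I * ((x / (2 * π) : ℝ) : ℂ) : ℂ) = ↑x * Complex.I := by
        push_cast
        field_simp
      rw [he]
      rw [norm_mul, Complex.norm_real, Complex.norm_I, mul_one, Real.norm_eq_abs]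
    rw [h2] at h1
    rw [mul_comm] at h1
    have := (le_div_iff₀ (abs_pos.2 hx)).2 h1
    simpa [div_eq_mul_inv] using this
  -- main estimate
  simp only [hFeq]
  rw [← lintegral_add_compl
    (fun x : ℝ => (‖𝓕 f (x / (2 * π))‖₊ : ENNReal) ^ 2 * ENNReal.ofReal (|x| ^ (-s)))
    (measurableSet_Icc : MeasurableSet (Icc (-1:ℝ) 1))]
  refine ENNReal.add_lt_top.2 ⟨?_, ?_⟩
  · calc ∫⁻ x in Icc (-1:ℝ) 1,
          (‖𝓕 f (x / (2 * π))‖₊ : ENNReal) ^ 2 * ENNReal.ofReal (|x| ^ (-s))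
        ≤ ∫⁻ x in Icc (-1:ℝ) 1, ENNReal.ofReal (C ^ 2 * |x| ^ (-s)) := by
          refine setLIntegral_mono' measurableSet_Icc fun x hx => ?_
          have h1 : (‖𝓕 f (x / (2 * π))‖₊ : ENNReal) ≤ ENNReal.ofReal C := by
            rw [← enorm_eq_nnnorm, ← ofReal_norm]
            exact ENNReal.ofReal_le_ofReal (hA _)
          calc (‖𝓕 f (x / (2 * π))‖₊ : ENNReal) ^ 2 * ENNReal.ofReal (|x| ^ (-s))
              ≤ (ENNReal.ofReal C) ^ 2 * ENNReal.ofReal (|x| ^ (-s)) :=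
                mul_le_mul_left (pow_le_pow_left' h1 2) _
            _ = ENNReal.ofReal (C ^ 2 * |x| ^ (-s)) := by
                rw [← ENNReal.ofReal_pow hC0,
                  ← ENNReal.ofReal_mul (by positivity : (0:ℝ) ≤ C ^ 2)]
      _ < ⊤ := ((weight_int_Icc s hs1).const_mul (C ^ 2)).lintegral_lt_top
  · calc ∫⁻ x in (Icc (-1:ℝ) 1)ᶜ,
          (‖𝓕 f (x / (2 * π))‖₊ : ENNReal) ^ 2 * ENNReal.ofReal (|x| ^ (-s))
        ≤ ∫⁻ x in (Icc (-1:ℝ) 1)ᶜ, ENNReal.ofReal (C' ^ 2 * |x| ^ (-s - 2)) := by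
          refine setLIntegral_mono' measurableSet_Icc.compl fun x hx => ?_
          have hx1 : 1 < |x| := by
            simp only [mem_compl_iff, mem_Icc, not_and_or, not_le] at hx
            rcases hx with h | h
            · rw [abs_of_neg (by linarith)]; linarith
            · rw [abs_of_pos (by linarith)]; linarith
          have hx0 : x ≠ 0 := by
            intro h; rw [h] at hx1; norm_num at hx1
          have habs : (0:ℝ) < |x| := abs_pos.2 hx0
          have h1 : (‖𝓕 f (x / (2 * π))‖₊ : ENNReal) ≤ ENNReal.ofReal (C' * |x|⁻¹) := by
            rw [← enorm_eq_nnnorm, ← ofReal_norm]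
            exact ENNReal.ofReal_le_ofReal (hB x hx0)
          have hkey : (C' * |x|⁻¹) ^ 2 * |x| ^ (-s) = C' ^ 2 * |x| ^ (-s - 2) := by
            have h3 : |x| ^ (-s - 2) = |x| ^ (-s) / |x| ^ 2 := by
              rw [Real.rpow_sub habs, Real.rpow_two]
            rw [h3, mul_pow]
            field_simp
          calc (‖𝓕 f (x / (2 * π))‖₊ : ENNReal) ^ 2 * ENNReal.ofReal (|x| ^ (-s))
              ≤ (ENNReal.ofReal (C' * |x|⁻¹)) ^ 2 * ENNReal.ofReal (|x| ^ (-s)) :=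
                mul_le_mul_left (pow_le_pow_left' h1 2) _
            _ = ENNReal.ofReal ((C' * |x|⁻¹) ^ 2 * |x| ^ (-s)) := by
                rw [← ENNReal.ofReal_pow (by positivity : (0:ℝ) ≤ C' * |x|⁻¹),
                  ← ENNReal.ofReal_mul (by positivity : (0:ℝ) ≤ (C' * |x|⁻¹) ^ 2)]
            _ = ENNReal.ofReal (C' ^ 2 * |x| ^ (-s - 2)) := by rw [hkey]
      _ < ⊤ := ((weight_int_tail s hs0).const_mul (C' ^ 2)).lintegral_lt_top
end

section
/- For 0 < Re(s) < 1 and x ∈ ℝ, x ≠ 0, one has φ_s(x) = (√π / Γ((1+s)/2)) · ∫₀^∞ ξ^{s/2 - 1} e^{-ξ} e^{-x²/(4ξ)} dξ, where φ_s(x) = ∫_ℝ e^{-ixy} (1+y²)^{-(s+1)/2} dy. -/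
open MeasureTheory Complex Set

theorem phi_s_subordination (s : ℂ) (hs0 : 0 < s.re) (hs1 : s.re < 1)
    (x : ℝ) (hx : x ≠ 0) :
    (∫ y : ℝ, Complex.exp (-(x * y) * Complex.I) * ((1 + (y : ℂ) ^ 2)) ^ (-(s + 1) / 2)) =
      ((Real.sqrt Real.pi : ℂ) / Complex.Gamma ((1 + s) / 2)) *
        ∫ ξ in Set.Ioi (0 : ℝ),
          (ξ : ℂ) ^ (s / 2 - 1) * Complex.exp (-(ξ : ℂ)) *
            Complex.exp (-((x : ℂ) ^ 2 / (4 * (ξ : ℂ)))) := by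
  set r : ℂ := (s + 1) / 2 with hr_def
  have hr_re : r.re = (s.re + 1) / 2 := by
    rw [hr_def]
    simp [Complex.div_re, Complex.normSq]
  have hr_pos : 0 < r.re := by rw [hr_re]; linarith
  have hr_half : (0:ℝ) < r.re - 1/2 := by rw [hr_re]; linarith
  have hGamma_ne : Complex.Gamma r ≠ 0 := Complex.Gamma_ne_zero_of_re_pos hr_pos
  -- pointwise subordination identity
  have hpt : ∀ y : ℝ, (1 + (y:ℂ)^2) ^ (-(s+1)/2)
      = (Complex.Gamma r)⁻¹ *
        ∫ ξ in Ioi (0:ℝ), (ξ:ℂ) ^ (r - 1) * Complex.exp (-(((1+y^2:ℝ):ℂ) * ξ)) := by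
    intro y
    have hy : (0:ℝ) < 1 + y^2 := by positivity
    have harg : (((1+y^2:ℝ):ℂ)).arg ≠ Real.pi := by
      rw [Complex.arg_ofReal_of_nonneg hy.le]
      exact Real.pi_ne_zero.symm
    rw [integral_cpow_mul_exp_neg_mul_Ioi hr_pos hy]
    rw [one_div, inv_cpow _ _ harg, ← cpow_neg]
    rw [show ((1+y^2:ℝ):ℂ) = 1 + (y:ℂ)^2 by push_cast; ring]
    rw [show (-r : ℂ) = -(s+1)/2 by rw [hr_def]; ring]
    field_simp
  set F : ℝ → ℝ → ℂ := fun y ξ =>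
    Complex.exp (-((x:ℂ) * (y:ℂ)) * I) *
      ((ξ:ℂ) ^ (r - 1) * Complex.exp (-(((1+y^2:ℝ):ℂ) * ξ))) with hF_def
  -- measurability of the double integrand
  have hmeas : AEStronglyMeasurable (Function.uncurry F)
      ((volume : Measure ℝ).prod ((volume : Measure ℝ).restrict (Ioi 0))) := by
    have heq : (volume : Measure ℝ).prod ((volume : Measure ℝ).restrict (Ioi 0))
        = ((volume : Measure ℝ).prod (volume : Measure ℝ)).restrict (univ ×ˢ Ioi 0) := by
      rw [← Measure.prod_restrict, Measure.restrict_univ]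
    rw [heq]
    refine ContinuousOn.aestronglyMeasurable (fun p hp => ?_)
      (MeasurableSet.univ.prod measurableSet_Ioi)
    have hp2 : (0:ℝ) < p.2 := hp.2
    apply ContinuousAt.continuousWithinAt
    apply ContinuousAt.mul
    · exact (Complex.continuous_exp.comp (by continuity)).continuousAt
    apply ContinuousAt.mul
    · exact (continuousAt_cpow_const (by simp [Complex.mem_slitPlane_iff, hp2])).comp
        (Complex.continuous_ofReal.continuousAt.comp continuousAt_snd)
    · exact (Complex.continuous_exp.comp (by continuity)).continuousAt
  -- integrability in y for fixed ξ > 0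
  have hF_y : ∀ ξ ∈ Ioi (0:ℝ), Integrable (fun y => F y ξ) := by
    intro ξ hξ
    have hξ' : (0:ℝ) < ξ := hξ
    have h1 : Integrable (fun y : ℝ =>
        Complex.exp (-(ξ:ℂ) * (y:ℂ)^2 + (-(x:ℂ)*I) * (y:ℂ) + (-(ξ:ℂ)))) :=
      integrable_cexp_quadratic (by simpa using hξ') _ _
    refine (h1.const_mul ((ξ:ℂ) ^ (r-1))).congr (Filter.Eventually.of_forall fun y => ?_)
    simp only [hF_def]
    rw [show (-(ξ:ℂ) * (y:ℂ)^2 + (-(x:ℂ)*I) * (y:ℂ) + (-(ξ:ℂ)))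
        = -((x:ℂ) * (y:ℂ)) * I + -((((1+y^2:ℝ)):ℂ) * ξ) by push_cast; ring,
      Complex.exp_add]
    ring
  -- the norm of the integrand
  have hnorm : ∀ ξ ∈ Ioi (0:ℝ), ∀ y : ℝ,
      ‖F y ξ‖ = ξ ^ (r.re - 1) * (Real.exp (-ξ) * Real.exp (-ξ * y^2)) := by
    intro ξ hξ y
    have hξ' : (0:ℝ) < ξ := hξ
    rw [hF_def]
    simp only [norm_mul, Complex.norm_exp,
      Complex.norm_cpow_eq_rpow_re_of_pos hξ']
    have h1 : (-((x:ℂ) * (y:ℂ)) * I).re = 0 := by simp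
    have h2 : (-(((1+y^2:ℝ):ℂ) * (ξ:ℂ))).re = -ξ + -(ξ * y^2) := by
      rw [← Complex.ofReal_mul, ← Complex.ofReal_neg, Complex.ofReal_re]; ring
    rw [h1, h2, Real.exp_zero, one_mul, Real.exp_add]
    norm_num [Complex.sub_re]
  -- integrability of the y-integral of norms
  have hnormint : Integrable (fun ξ => ∫ y, ‖F y ξ‖)
      ((volume : Measure ℝ).restrict (Ioi 0)) := by
    have hg : IntegrableOn
        (fun ξ : ℝ => Real.sqrt Real.pi * (Real.exp (-ξ) * ξ ^ (r.re - 1/2 - 1)))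
        (Ioi 0) := by
      have := (Real.GammaIntegral_convergent hr_half).const_mul (Real.sqrt Real.pi)
      simpa [IntegrableOn] using this
    refine hg.congr ((ae_restrict_iff' measurableSet_Ioi).mpr
      (Filter.Eventually.of_forall fun ξ hξ => ?_))
    have hξ' : (0:ℝ) < ξ := hξ
    simp_rw [hnorm ξ hξ]
    rw [integral_const_mul, integral_const_mul, integral_gaussian]
    have hsq : Real.sqrt (Real.pi / ξ) = Real.sqrt Real.pi * ξ ^ (-(1/2) : ℝ) := by
      rw [Real.sqrt_div Real.pi_pos.le, Real.sqrt_eq_rpow ξ, div_eq_mul_inv,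
        ← Real.rpow_neg hξ'.le]
    have hcomb : ξ ^ (r.re - 1) * ξ ^ (-(1/2) : ℝ) = ξ ^ (r.re - 1/2 - 1) := by
      rw [← Real.rpow_add hξ']; ring_nf
    rw [hsq, show ξ ^ (r.re-1) * (Real.exp (-ξ) * (Real.sqrt Real.pi * ξ ^ (-(1/2):ℝ)))
        = Real.sqrt Real.pi * (Real.exp (-ξ) * (ξ ^ (r.re-1) * ξ ^ (-(1/2):ℝ))) by ring,
      hcomb]
  -- double integrability
  have hInt : Integrable (Function.uncurry F)
      ((volume : Measure ℝ).prod ((volume : Measure ℝ).restrict (Ioi 0))) := by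
    refine (integrable_prod_iff' hmeas).mpr ⟨?_, ?_⟩
    · exact (ae_restrict_iff' measurableSet_Ioi).mpr (Filter.Eventually.of_forall hF_y)
    · exact hnormint
  -- inner integral evaluation
  have hinner : ∀ ξ ∈ Ioi (0:ℝ), (∫ y : ℝ, F y ξ)
      = (Real.sqrt Real.pi : ℂ) *
        ((ξ:ℂ) ^ (s/2 - 1) * Complex.exp (-(ξ:ℂ)) *
          Complex.exp (-((x:ℂ)^2 / (4 * (ξ:ℂ))))) := by
    intro ξ hξ
    have hξ' : (0:ℝ) < ξ := hξ
    have hξ0 : (ξ:ℂ) ≠ 0 := Complex.ofReal_ne_zero.mpr hξ'.ne'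
    calc (∫ y : ℝ, F y ξ)
        = ∫ y : ℝ, ((ξ:ℂ) ^ (r-1) * Complex.exp (-(ξ:ℂ))) *
            (Complex.exp (I * (-(x:ℂ)) * (y:ℂ)) * Complex.exp (-(ξ:ℂ) * (y:ℂ)^2)) := by
          refine integral_congr_ae (Filter.Eventually.of_forall fun y => ?_)
          simp only [hF_def]
          rw [show (-((((1+y^2:ℝ)):ℂ) * (ξ:ℂ))) = -(ξ:ℂ) + -(ξ:ℂ) * (y:ℂ)^2 by push_cast; ring,
            Complex.exp_add, show I * (-(x:ℂ)) * (y:ℂ) = -((x:ℂ) * (y:ℂ)) * I by ring]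
          ring
      _ = ((ξ:ℂ) ^ (r-1) * Complex.exp (-(ξ:ℂ))) *
            ∫ y : ℝ, Complex.exp (I * (-(x:ℂ)) * (y:ℂ)) * Complex.exp (-(ξ:ℂ) * (y:ℂ)^2) :=
          integral_const_mul _ _
      _ = ((ξ:ℂ) ^ (r-1) * Complex.exp (-(ξ:ℂ))) *
            (((Real.pi : ℂ) / (ξ:ℂ)) ^ (1/2 : ℂ) *
              Complex.exp (-(-(x:ℂ))^2 / (4 * (ξ:ℂ)))) := by
          rw [fourierIntegral_gaussian (by simpa using hξ') (-(x:ℂ))]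
      _ = (Real.sqrt Real.pi : ℂ) *
            ((ξ:ℂ) ^ (s/2 - 1) * Complex.exp (-(ξ:ℂ)) *
              Complex.exp (-((x:ℂ)^2 / (4 * (ξ:ℂ))))) := by
          have h0 : ((Real.pi/ξ) ^ ((1:ℝ)/2) : ℝ)
              = Real.sqrt Real.pi * ξ ^ (-((1:ℝ)/2)) := by
            rw [Real.div_rpow Real.pi_pos.le hξ'.le, ← Real.sqrt_eq_rpow,
              Real.rpow_neg hξ'.le, ← Real.sqrt_eq_rpow, div_eq_mul_inv]
          have hdiv : ((Real.pi : ℂ) / (ξ:ℂ)) ^ (1/2 : ℂ)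
              = (Real.sqrt Real.pi : ℂ) * (ξ:ℂ) ^ (-(1/2) : ℂ) := by
            rw [← Complex.ofReal_div,
              show (1/2 : ℂ) = (((1:ℝ)/2 : ℝ) : ℂ) by norm_num,
              ← Complex.ofReal_cpow (by positivity) ((1:ℝ)/2), h0,
              Complex.ofReal_mul, Complex.ofReal_cpow hξ'.le]
            norm_num
          rw [hdiv]
          have hcomb : (ξ:ℂ) ^ (r-1) * (ξ:ℂ) ^ (-(1/2) : ℂ) = (ξ:ℂ) ^ (s/2 - 1) := by
            rw [← Complex.cpow_add _ _ hξ0]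
            congr 1
            rw [hr_def]; ring
          rw [show (-(-(x:ℂ))^2 / (4 * (ξ:ℂ))) = -((x:ℂ)^2 / (4 * (ξ:ℂ))) by ring]
          rw [← hcomb]
          ring
  -- main computation
  calc (∫ y : ℝ, Complex.exp (-((x:ℂ) * (y:ℂ)) * Complex.I) * ((1 + (y : ℂ) ^ 2)) ^ (-(s + 1) / 2))
      = ∫ y : ℝ, (Complex.Gamma r)⁻¹ * ∫ ξ in Ioi (0:ℝ), F y ξ := by
        refine integral_congr_ae (Filter.Eventually.of_forall fun y => ?_)
        show Complex.exp (-((x:ℂ) * (y:ℂ)) * Complex.I) * ((1 + (y:ℂ)^2)) ^ (-(s+1)/2)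
          = (Complex.Gamma r)⁻¹ * ∫ ξ in Ioi (0:ℝ), F y ξ
        rw [hpt y, mul_left_comm]
        congr 1
        exact (integral_const_mul _ _).symm
    _ = (Complex.Gamma r)⁻¹ * ∫ y : ℝ, ∫ ξ in Ioi (0:ℝ), F y ξ := integral_const_mul _ _
    _ = (Complex.Gamma r)⁻¹ * ∫ ξ in Ioi (0:ℝ), ∫ y : ℝ, F y ξ := by
        rw [integral_integral_swap hInt]
    _ = (Complex.Gamma r)⁻¹ * ∫ ξ in Ioi (0:ℝ), (Real.sqrt Real.pi : ℂ) *
          ((ξ:ℂ) ^ (s/2 - 1) * Complex.exp (-(ξ:ℂ)) *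
            Complex.exp (-((x:ℂ)^2 / (4 * (ξ:ℂ))))) := by
        congr 1
        exact setIntegral_congr_fun measurableSet_Ioi fun ξ hξ => hinner ξ hξ
    _ = ((Real.sqrt Real.pi : ℂ) / Complex.Gamma ((1 + s) / 2)) *
        ∫ ξ in Set.Ioi (0 : ℝ),
          (ξ : ℂ) ^ (s / 2 - 1) * Complex.exp (-(ξ : ℂ)) *
            Complex.exp (-((x : ℂ) ^ 2 / (4 * (ξ : ℂ)))) := by
        rw [integral_const_mul, show ((1+s)/2 : ℂ) = r by rw [hr_def]; ring,
          div_eq_mul_inv]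
        ring
end

section
/- Let G₀ be an abelian topological group, R a unitary representation of G₀ on a Hilbert space H, and set L(g) = R(g^{-1}). Let φ ∈ H be such that {R(g)φ : g ∈ G₀} spans a dense subspace of H. If ⟨φ, R(g)φ⟩ is real for all g ∈ G₀, then there exists a unitary operator W on H with W² = I, W∘R(g) = L(g)∘W for all g, and Wφ = φ (or Wφ = -φ). -/
open scoped InnerProductSpace

theorem generalized_watson_transform_exists
    (G₀ : Type*) [CommGroup G₀] [TopologicalSpace G₀] [IsTopologicalGroup G₀]
    (H : Type*) [NormedAddCommGroup H] [InnerProductSpace ℂ H] [CompleteSpace H]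
    (R : G₀ →* (H ≃ₗᵢ[ℂ] H)) (φ : H)
    (hdense : Dense ((Submodule.span ℂ (Set.range fun g : G₀ => R g φ) : Submodule ℂ H) : Set H))
    (hreal : ∀ g : G₀, (⟪φ, R g φ⟫_ℂ).im = 0) :
    ∃ W : H ≃ₗᵢ[ℂ] H,
      (∀ x : H, W (W x) = x) ∧
      (∀ (g : G₀) (x : H), W (R g x) = R g⁻¹ (W x)) ∧
      (W φ = φ ∨ W φ = -φ) := by
  classical
  set v : G₀ → H := fun g => R g φ with hv
  set w : G₀ → H := fun g => R g⁻¹ φ with hw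
  have hRmul : ∀ (g h : G₀) (x : H), R g (R h x) = R (g * h) x := by
    intro g h x; rw [map_mul]; rfl
  have hid : ∀ x : H, R 1 x = x := by
    intro x; rw [map_one]; rfl
  -- conjugation symmetry from reality
  have hconj : ∀ k : G₀, ⟪φ, R k⁻¹ φ⟫_ℂ = ⟪φ, R k φ⟫_ℂ := by
    intro k
    have h1 : ⟪φ, R k⁻¹ φ⟫_ℂ = ⟪R k φ, φ⟫_ℂ := by
      have := (R k).inner_map_map φ (R k⁻¹ φ)
      rw [hRmul, mul_inv_cancel, hid] at this
      exact this.symm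
    rw [h1, ← inner_conj_symm]
    exact (Complex.conj_eq_iff_im.mpr (hreal k))
  -- key: inner products are preserved by g ↦ g⁻¹ on the orbit
  have hinner : ∀ g h : G₀, ⟪w g, w h⟫_ℂ = ⟪v g, v h⟫_ℂ := by
    intro g h
    have h1 : ⟪v g, v h⟫_ℂ = ⟪φ, R (g⁻¹ * h) φ⟫_ℂ := by
      have := (R g⁻¹).inner_map_map (R g φ) (R h φ)
      rw [hRmul, hRmul, inv_mul_cancel, hid] at this
      exact this.symm
    have h2 : ⟪w g, w h⟫_ℂ = ⟪φ, R (g * h⁻¹) φ⟫_ℂ := by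
      have := (R g).inner_map_map (R g⁻¹ φ) (R h⁻¹ φ)
      rw [hRmul, hRmul, mul_inv_cancel, hid] at this
      simpa [hw] using this.symm
    have h3 : (g * h⁻¹) = (g⁻¹ * h)⁻¹ := by
      simp [mul_comm]
    rw [h1, h2, h3, hconj]
  set T₁ : (G₀ →₀ ℂ) →ₗ[ℂ] H := Finsupp.linearCombination ℂ v with hT₁
  set T₀ : (G₀ →₀ ℂ) →ₗ[ℂ] H := Finsupp.linearCombination ℂ w with hT₀
  have hTT : ∀ c d : G₀ →₀ ℂ, ⟪T₀ c, T₀ d⟫_ℂ = ⟪T₁ c, T₁ d⟫_ℂ := by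
    intro c d
    simp only [hT₀, hT₁, Finsupp.linearCombination_apply, Finsupp.sum, sum_inner, inner_sum,
      inner_smul_left, inner_smul_right]
    refine Finset.sum_congr rfl fun g _ => ?_
    congr 1
    exact Finset.sum_congr rfl fun h _ => by rw [hinner]
  have hnorm : ∀ c : G₀ →₀ ℂ, ‖T₀ c‖ = ‖T₁ c‖ := by
    intro c
    have h1 : ‖T₀ c‖ ^ 2 = ‖T₁ c‖ ^ 2 := by
      rw [← @inner_self_eq_norm_sq ℂ, ← @inner_self_eq_norm_sq ℂ, hTT]
    rw [← Real.sqrt_sq (norm_nonneg (T₀ c)), h1, Real.sqrt_sq (norm_nonneg (T₁ c))]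
  have hle : LinearMap.ker T₁ ≤ LinearMap.ker T₀ := by
    intro c hc
    rw [LinearMap.mem_ker] at hc ⊢
    have := hnorm c
    rw [hc, norm_zero, norm_eq_zero] at this
    exact this
  -- descend T₀ to a linear map on the range of T₁
  set f : LinearMap.range T₁ →ₗ[ℂ] H :=
    (Submodule.liftQ (LinearMap.ker T₁) T₀ hle).comp T₁.quotKerEquivRange.symm.toLinearMap
    with hf_def
  have hf : ∀ (c : G₀ →₀ ℂ) (hc : T₁ c ∈ LinearMap.range T₁), f ⟨T₁ c, hc⟩ = T₀ c := by
    intro c hc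
    have h1 : T₁.quotKerEquivRange.symm ⟨T₁ c, hc⟩ =
        Submodule.Quotient.mk c := by
      rw [LinearEquiv.symm_apply_eq]
      exact Subtype.ext (T₁.quotKerEquivRange_apply_mk c).symm
    simp only [hf_def, LinearMap.comp_apply, LinearEquiv.coe_coe, h1, Submodule.liftQ_apply]
  have hfiso : ∀ x : LinearMap.range T₁, ‖f x‖ = ‖x‖ := by
    rintro ⟨x, hx⟩
    obtain ⟨c, rfl⟩ := hx
    rw [hf c (LinearMap.mem_range_self T₁ c)]
    exact hnorm c
  set fI : LinearMap.range T₁ →ₗᵢ[ℂ] H := ⟨f, hfiso⟩ with hfI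
  set e : LinearMap.range T₁ →L[ℂ] H := (LinearMap.range T₁).subtypeL with he
  have hrange : (LinearMap.range T₁ : Submodule ℂ H) =
      Submodule.span ℂ (Set.range v) := Finsupp.range_linearCombination ℂ
  have h_dense : DenseRange e := by
    have : Set.range e = (LinearMap.range T₁ : Set H) := Subtype.range_coe
    rw [DenseRange, this, hrange]
    exact hdense
  have h_e : IsUniformInducing e := isometry_subtype_coe.isUniformInducing
  set W₀ : H →L[ℂ] H := fI.toContinuousLinearMap.extend e with hW₀
  have hW' : ∀ c : G₀ →₀ ℂ, W₀ (T₁ c) = T₀ c := by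
    intro c
    have h1 : T₁ c = e ⟨T₁ c, LinearMap.mem_range_self T₁ c⟩ := rfl
    rw [h1, hW₀, ContinuousLinearMap.extend_eq (h_dense := h_dense) (h_e := h_e)]
    exact hf c _
  have hWv : ∀ g : G₀, W₀ (v g) = w g := by
    intro g
    have h1 : v g = T₁ (Finsupp.single g 1) := by
      simp [hT₁, Finsupp.linearCombination_single]
    have h2 : w g = T₀ (Finsupp.single g 1) := by
      simp [hT₀, Finsupp.linearCombination_single]
    rw [h1, hW', h2]
  set M : Submodule ℂ H := Submodule.span ℂ (Set.range v) with hM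
  -- involution on the dense subspace
  have hinv_s : ∀ x ∈ M, W₀ (W₀ x) = x := by
    intro x hx
    induction hx using Submodule.span_induction with
    | mem x hx =>
      obtain ⟨g, rfl⟩ := hx
      have hwv : w g = v g⁻¹ := rfl
      rw [hWv g, hwv, hWv g⁻¹]
      show R g⁻¹⁻¹ φ = v g
      rw [inv_inv]
    | zero => simp
    | add x y _ _ hx hy => simp [map_add, hx, hy]
    | smul a x _ hx => simp [map_smul, hx]
  have hinv : ∀ x : H, W₀ (W₀ x) = x := by
    have := Continuous.ext_on hdense (W₀.continuous.comp W₀.continuous) continuous_id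
      (fun x hx => hinv_s x hx)
    exact fun x => congrFun this x
  -- intertwining on the dense subspace
  have hint_s : ∀ g : G₀, ∀ x ∈ M, W₀ (R g x) = R g⁻¹ (W₀ x) := by
    intro g x hx
    induction hx using Submodule.span_induction with
    | mem x hx =>
      obtain ⟨h, rfl⟩ := hx
      have h1 : R g (v h) = v (g * h) := hRmul g h φ
      have h2 : R g⁻¹ (w h) = w (g * h) := by
        rw [hw, hRmul]
        simp [mul_comm, mul_inv_rev]
      rw [h1, hWv (g * h), hWv h, h2]
    | zero => simp
    | add x y _ _ hx hy => simp [map_add, hx, hy]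
    | smul a x _ hx => simp [map_smul, hx]
  have hint : ∀ (g : G₀) (x : H), W₀ (R g x) = R g⁻¹ (W₀ x) := by
    intro g
    have := Continuous.ext_on hdense (W₀.continuous.comp (R g).continuous)
      ((R g⁻¹).continuous.comp W₀.continuous) (fun x hx => hint_s g x hx)
    exact fun x => congrFun this x
  -- isometry
  have hiso_s : ∀ x ∈ M, ‖W₀ x‖ = ‖x‖ := by
    intro x hx
    have hx' : x ∈ LinearMap.range T₁ := by rw [hrange]; exact hx
    obtain ⟨c, rfl⟩ := hx'
    rw [hW']
    exact hnorm c
  have hiso : ∀ x : H, ‖W₀ x‖ = ‖x‖ := by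
    have := Continuous.ext_on hdense (continuous_norm.comp W₀.continuous) continuous_norm
      (fun x hx => hiso_s x hx)
    exact fun x => congrFun this x
  -- W₀ fixes φ
  have hWφ : W₀ φ = φ := by
    have h1 : φ = v 1 := (hid φ).symm
    have h2 : w 1 = φ := by
      show R (1 : G₀)⁻¹ φ = φ
      rw [inv_one]
      exact hid φ
    rw [h1, hWv 1, h2, h1]
  -- assemble the unitary involution
  refine ⟨⟨⟨W₀.toLinearMap, ⇑W₀, hinv, hinv⟩, fun x => hiso x⟩, ?_, ?_, ?_⟩
  · exact hinv
  · exact hint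
  · left; exact hWφ
end
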